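/- (Corrected Theorem 3.1 of ZiCO) Given a linear regressor f(x; a) = aᵀx with M training samples (xᵢ, yᵢ) where ‖xᵢ‖ = 1, let g(xᵢ) = xᵢxᵢᵀa − yᵢxᵢ be the per-sample gradient of the MSE loss, â = a − η Σᵢ g(xᵢ) the updated parameters with learning rate η, μⱼ = (1/M) Σᵢ gⱼ(xᵢ) and σⱼ² = (1/M) Σᵢ (gⱼ(xᵢ) − μⱼ)². Then for any η ∈ ℝ, the total training loss satisfies Σᵢ ½(âᵀxᵢ − yᵢ)² ≤ ½ M Σⱼ [σⱼ² + ((Mη − 1)μⱼ)²]. -/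
import Mathlib


open RealInnerProductSpace Finset

lemma zico_aux (M : ℕ) (hM : 1 ≤ M) (c : Fin M → ℝ) (η : ℝ) :
    ∑ i, (c i - η * ∑ k, c k) ^ 2
      = (M : ℝ) * ((1 / (M : ℝ)) * ∑ i, (c i - (1 / (M : ℝ)) * ∑ k, c k) ^ 2
          + (((M : ℝ) * η - 1) * ((1 / (M : ℝ)) * ∑ k, c k)) ^ 2) := by
  have hM0 : (M : ℝ) ≠ 0 := by positivity
  have h1 : ∀ t : ℝ, ∑ i, (c i - t) ^ 2
      = (∑ i, (c i) ^ 2) - 2 * t * (∑ k, c k) + (M : ℝ) * t ^ 2 := by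
    intro t
    have : ∀ i : Fin M, (c i - t) ^ 2 = (c i) ^ 2 - 2 * t * c i + t ^ 2 := by
      intro i; ring
    rw [Finset.sum_congr rfl (fun i _ => this i), Finset.sum_add_distrib,
      Finset.sum_sub_distrib, ← Finset.mul_sum, Finset.sum_const,
      Finset.card_fin, nsmul_eq_mul]
  rw [h1, h1]
  field_simp
  ring

/-- Corrected Theorem 3.1 of ZiCO: for any learning rate `η`, the total
training loss after one gradient step is bounded by
`½ M Σⱼ [σⱼ² + ((Mη − 1)μⱼ)²]`. -/
theorem zico_corrected_bound (d M : ℕ) (hM : 1 ≤ M)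
    (x : Fin M → EuclideanSpace ℝ (Fin d)) (hx : ∀ i, ‖x i‖ = 1)
    (y : Fin M → ℝ) (a : EuclideanSpace ℝ (Fin d)) (η : ℝ) :
    let g : Fin M → EuclideanSpace ℝ (Fin d) :=
      fun i => (⟪a, x i⟫ : ℝ) • x i - y i • x i
    let ahat : EuclideanSpace ℝ (Fin d) := a - η • ∑ i, g i
    let μ : Fin d → ℝ := fun j => (1 / (M : ℝ)) * ∑ i, g i j
    let σsq : Fin d → ℝ := fun j => (1 / (M : ℝ)) * ∑ i, (g i j - μ j) ^ 2
    ∑ i, (1 / 2) * (⟪ahat, x i⟫ - y i) ^ 2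
      ≤ (1 / 2) * ((M : ℝ) * ∑ j, (σsq j + (((M : ℝ) * η - 1) * μ j) ^ 2)) := by
  intro g ahat μ σsq
  set S : EuclideanSpace ℝ (Fin d) := ∑ i, g i with hS
  set v : Fin M → EuclideanSpace ℝ (Fin d) := fun i => g i - η • S with hv
  -- Step 1: ⟪ahat, x i⟫ - y i = ⟪v i, x i⟫
  have hxx : ∀ i, (⟪x i, x i⟫ : ℝ) = 1 := by
    intro i
    rw [real_inner_self_eq_norm_sq, hx i]; norm_num
  have key : ∀ i, (⟪ahat, x i⟫ : ℝ) - y i = ⟪v i, x i⟫ := by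
    intro i
    have hg : (⟪g i, x i⟫ : ℝ) = ⟪a, x i⟫ - y i := by
      have hgi : g i = (⟪a, x i⟫ : ℝ) • x i - y i • x i := rfl
      rw [hgi, inner_sub_left, real_inner_smul_left, real_inner_smul_left,
        hxx i, mul_one, mul_one]
    simp only [hv, ahat, inner_sub_left, real_inner_smul_left, hg]
    ring
  -- Step 2: Cauchy–Schwarz pointwise
  have cs : ∀ i, ((⟪ahat, x i⟫ : ℝ) - y i) ^ 2 ≤ ‖v i‖ ^ 2 := by
    intro i
    rw [key i]
    have h := abs_real_inner_le_norm (v i) (x i)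
    rw [hx i, mul_one] at h
    calc (⟪v i, x i⟫ : ℝ) ^ 2 = |(⟪v i, x i⟫ : ℝ)| ^ 2 := (sq_abs _).symm
      _ ≤ ‖v i‖ ^ 2 := by
          apply pow_le_pow_left₀ (abs_nonneg _) h
  -- Step 3: norm squared as coordinate sum
  have normsq : ∀ i, ‖v i‖ ^ 2 = ∑ j, (g i j - η * S j) ^ 2 := by
    intro i
    rw [← real_inner_self_eq_norm_sq]
    rw [PiLp.inner_apply]
    apply Finset.sum_congr rfl
    intro j _
    simp [hv, sq]
  have hSj : ∀ j, S j = ∑ i, g i j := by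
    intro j
    have h := map_sum (EuclideanSpace.proj (𝕜 := ℝ) j) g Finset.univ
    rw [hS]; exact h
  calc ∑ i, (1 / 2) * ((⟪ahat, x i⟫ : ℝ) - y i) ^ 2
      ≤ ∑ i, (1 / 2) * (∑ j, (g i j - η * S j) ^ 2) := by
        apply Finset.sum_le_sum
        intro i _
        have := cs i
        rw [normsq i] at this
        linarith
    _ = (1 / 2) * ∑ j, ∑ i, (g i j - η * ∑ k, g k j) ^ 2 := by
        rw [← Finset.mul_sum, Finset.sum_comm]
        congr 1
        apply Finset.sum_congr rfl; intro j _
        apply Finset.sum_congr rfl; intro i _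
        rw [hSj j]
    _ = (1 / 2) * ((M : ℝ) * ∑ j, (σsq j + (((M : ℝ) * η - 1) * μ j) ^ 2)) := by
        congr 1
        rw [Finset.mul_sum]
        apply Finset.sum_congr rfl
        intro j _
        rw [zico_aux M hM (fun i => g i j) η]
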